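/- For all real numbers δ and ε with 0 < δ < 1/2 and 0 < ε < 1/2, the Kullback–Leibler divergence between the Bernoulli distribution with mean 1/2 − δ and the Bernoulli distribution with mean 1/2 + ε satisfies (1/2−δ)·log((1/2−δ)/(1/2+ε)) + (1/2+δ)·log((1/2+δ)/(1/2−ε)) ≤ (δ+ε)²/(1/4 − ε²). -/
import Mathlib


/-- KL divergence between Bernoulli(1/2 − δ) and Bernoulli(1/2 + ε) is at most
`(δ+ε)² / (1/4 − ε²)`. -/
theorem bernoulli_kl_specific_bound (δ ε : ℝ) (hδ0 : 0 < δ) (hδ : δ < 1 / 2)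
    (hε0 : 0 < ε) (hε : ε < 1 / 2) :
    (1 / 2 - δ) * Real.log ((1 / 2 - δ) / (1 / 2 + ε)) +
      (1 / 2 + δ) * Real.log ((1 / 2 + δ) / (1 / 2 - ε)) ≤
      (δ + ε) ^ 2 / (1 / 4 - ε ^ 2) := by
  have hp : (0:ℝ) < 1 / 2 - δ := by linarith
  have hq : (0:ℝ) < 1 / 2 + ε := by linarith
  have hp' : (0:ℝ) < 1 / 2 + δ := by linarith
  have hq' : (0:ℝ) < 1 / 2 - ε := by linarith
  have h1 : Real.log ((1 / 2 - δ) / (1 / 2 + ε)) ≤ (1 / 2 - δ) / (1 / 2 + ε) - 1 :=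
    Real.log_le_sub_one_of_pos (by positivity)
  have h2 : Real.log ((1 / 2 + δ) / (1 / 2 - ε)) ≤ (1 / 2 + δ) / (1 / 2 - ε) - 1 :=
    Real.log_le_sub_one_of_pos (by positivity)
  have key : (1 / 2 - δ) * ((1 / 2 - δ) / (1 / 2 + ε) - 1) +
      (1 / 2 + δ) * ((1 / 2 + δ) / (1 / 2 - ε) - 1) = (δ + ε) ^ 2 / (1 / 4 - ε ^ 2) := by
    have hd : (0:ℝ) < 1 / 4 - ε ^ 2 := by nlinarith
    have e1 : (1 / 2 - δ) * ((1 / 2 - δ) / (1 / 2 + ε) - 1) =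
        ((1 / 2 - δ) * (1 / 2 - δ) - (1 / 2 - δ) * (1 / 2 + ε)) / (1 / 2 + ε) := by
      rw [mul_sub, mul_one, ← mul_div_assoc, sub_div,
        mul_div_cancel_right₀ _ (ne_of_gt hq)]
    have e2 : (1 / 2 + δ) * ((1 / 2 + δ) / (1 / 2 - ε) - 1) =
        ((1 / 2 + δ) * (1 / 2 + δ) - (1 / 2 + δ) * (1 / 2 - ε)) / (1 / 2 - ε) := by
      rw [mul_sub, mul_one, ← mul_div_assoc, sub_div,
        mul_div_cancel_right₀ _ (ne_of_gt hq')]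
    rw [e1, e2, div_add_div _ _ (ne_of_gt hq) (ne_of_gt hq'),
      div_eq_div_iff (by positivity) (ne_of_gt hd)]
    ring
  calc (1 / 2 - δ) * Real.log ((1 / 2 - δ) / (1 / 2 + ε)) +
      (1 / 2 + δ) * Real.log ((1 / 2 + δ) / (1 / 2 - ε))
      ≤ (1 / 2 - δ) * ((1 / 2 - δ) / (1 / 2 + ε) - 1) +
        (1 / 2 + δ) * ((1 / 2 + δ) / (1 / 2 - ε) - 1) := by
        gcongr
    _ = (δ + ε) ^ 2 / (1 / 4 - ε ^ 2) := key
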